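/- arXiv:2303.08859 — 2 statements merged into one kernel-verified Lean document; each statement's English description precedes it below -/
import Mathlib

section
/- Diagonal Lyapunov function for Schur-stable nonnegative matrices: Let M ∈ ℝ^{N×N} be a nonnegative matrix with spectral radius ρ(M) < 1. Then there exists a diagonal matrix P ∈ ℝ^{N×N} with strictly positive diagonal entries such that Mᵀ P M − P is negative definite. -/
/-!
Gelfand's formula gives a power `M ^ k` whose row sums are all below `1`; then
`x = ∑_{l<k} M ^ l 𝟙` satisfies `M x < x`, and likewise some `y > 0` satisfies `Mᵀ y < y`.
Take `P = diag (y / x)`. Row-wise Cauchy–Schwarz gives `(M z)ᵢ² ≤ (M x)ᵢ (M w)ᵢ` with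
`w = z² / x`, hence `∑ pᵢ (M z)ᵢ² ≤ ∑ yᵢ (M w)ᵢ = ⟪Mᵀ y, w⟫ < ⟪y, w⟫ = ∑ pᵢ zᵢ²`.
-/

open Matrix

noncomputable section

/-- Spectral radius of a real square matrix, computed via its complex spectrum. -/
def specRad {N : Type*} [Fintype N] [DecidableEq N] (A : Matrix N N ℝ) : ENNReal :=
  spectralRadius ℂ (A.map Complex.ofReal)

open Finset Filter

theorem eventually_nnnorm_pow_lt_one_of_spectralRadius_lt_one {A : Type*} [NormedRing A]
    [NormedAlgebra ℂ A] [CompleteSpace A] {a : A} (h : spectralRadius ℂ a < 1) :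
    ∀ᶠ k : ℕ in atTop, ‖a ^ k‖₊ < 1 := by
  filter_upwards [(spectrum.gelfand_formula a).eventually_lt_const h,
    eventually_gt_atTop 0] with k hk hk0
  by_contra! hge
  exact hk.not_ge (ENNReal.one_le_rpow (ENNReal.one_le_coe_iff.2 hge) (by positivity))

theorem Matrix.spectrum_transpose {K n : Type*} [Field K] [Fintype n] [DecidableEq n]
    (A : Matrix n n K) : spectrum K Aᵀ = spectrum K A := by
  ext μ
  simp only [mem_spectrum_iff_isRoot_charpoly, charpoly_transpose]

theorem specRad_transpose {n : Type*} [Fintype n] [DecidableEq n] (M : Matrix n n ℝ) :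
    specRad Mᵀ = specRad M := by
  simp only [specRad, spectralRadius, transpose_map, spectrum_transpose]

section LinftyOpNorm

attribute [local instance] Matrix.linftyOpNormedRing Matrix.linftyOpNormedAlgebra

theorem exists_pow_sum_abs_lt_one_of_specRad_lt_one {n : Type*} [Fintype n] [DecidableEq n]
    {M : Matrix n n ℝ} (hρ : specRad M < 1) : ∃ k : ℕ, ∀ i, ∑ j, |(M ^ k) i j| < 1 := by
  obtain ⟨k, hk⟩ := (eventually_nnnorm_pow_lt_one_of_spectralRadius_lt_one hρ).exists
  refine ⟨k, fun i => ?_⟩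
  have hmap : (M ^ k).map Complex.ofReal = M.map Complex.ofReal ^ k :=
    map_pow Complex.ofRealHom.mapMatrix M k
  rw [← hmap, linfty_opNNNorm_def] at hk
  have hrow := (Finset.le_sup (f := fun i => ∑ j, ‖(M ^ k).map Complex.ofReal i j‖₊)
    (mem_univ i)).trans_lt hk
  simpa [Complex.nnnorm_real, ← NNReal.coe_lt_coe] using hrow

end LinftyOpNorm

theorem Matrix.mulVec_apply_nonneg {α m n : Type*} [Fintype n] [Semiring α] [PartialOrder α]
    [IsOrderedRing α] {A : Matrix m n α} {v : n → α} (hA : ∀ i j, 0 ≤ A i j)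
    (hv : ∀ j, 0 ≤ v j) (i : m) : 0 ≤ (A *ᵥ v) i :=
  sum_nonneg fun j _ => mul_nonneg (hA i j) (hv j)

theorem exists_pos_mulVec_lt_of_sum_pow_lt_one {α n : Type*} [Fintype n] [DecidableEq n]
    [Ring α] [PartialOrder α] [IsOrderedRing α] {M : Matrix n n α} (hM : ∀ i j, 0 ≤ M i j)
    {k : ℕ} (hk : ∀ i, ∑ j, (M ^ k) i j < 1) :
    ∃ x : n → α, (∀ i, 0 < x i) ∧ ∀ i, (M *ᵥ x) i < x i := by
  set S : Matrix n n α := ∑ l ∈ range k, M ^ l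
  have hS : ∀ i j, 0 ≤ S i j := fun i j => by
    simp only [S, Matrix.sum_apply]
    exact sum_nonneg fun l _ => pow_apply_nonneg hM l i j
  have hMS : M * S = S + (M ^ k - 1) := by
    rw [← sub_eq_iff_eq_add', ← mul_geom_sum, sub_mul, one_mul]
  have hMx : ∀ i, (M *ᵥ S *ᵥ 1) i = (S *ᵥ 1) i + (∑ j, (M ^ k) i j - 1) := fun i => by
    rw [mulVec_mulVec, hMS, add_mulVec, sub_mulVec, one_mulVec]
    simp [mulVec, dotProduct]
  have hlt : ∀ i, (M *ᵥ S *ᵥ 1) i < (S *ᵥ 1) i := fun i => by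
    rw [hMx, add_lt_iff_neg_left, sub_neg]
    exact hk i
  refine ⟨S *ᵥ 1, fun i => ?_, hlt⟩
  have hx : ∀ j, 0 ≤ (S *ᵥ 1) j := mulVec_apply_nonneg hS fun _ => zero_le_one
  exact (mulVec_apply_nonneg hM hx i).trans_lt (hlt i)

theorem dotProduct_transpose_mul_diagonal_mul_sub_diagonal_mulVec {α n : Type*} [Fintype n]
    [DecidableEq n] [CommRing α] (M : Matrix n n α) (p z : n → α) :
    z ⬝ᵥ ((Mᵀ * diagonal p * M - diagonal p) *ᵥ z) =
      ∑ i, p i * (M *ᵥ z) i ^ 2 - ∑ i, p i * z i ^ 2 := by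
  rw [sub_mulVec, dotProduct_sub, ← mulVec_mulVec, ← mulVec_mulVec, dotProduct_mulVec z Mᵀ,
    vecMul_transpose]
  simp only [mulVec_diagonal, dotProduct]
  congr 1 <;> exact sum_congr rfl fun i _ => by ring

section LinearOrderedField

variable {α n : Type*} [Fintype n] [Field α] [LinearOrder α] [IsStrictOrderedRing α]
  {M : Matrix n n α} {x : n → α}

theorem sq_mulVec_apply_le (hM : ∀ i j, 0 ≤ M i j) (hx : ∀ j, 0 < x j) (z : n → α) (i : n) :
    (M *ᵥ z) i ^ 2 ≤ (M *ᵥ x) i * (M *ᵥ fun j => z j ^ 2 / x j) i :=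
  sum_sq_le_sum_mul_sum_of_sq_le_mul _
    (fun j _ => mul_nonneg (hM i j) (hx j).le)
    (fun j _ => mul_nonneg (hM i j) (div_nonneg (sq_nonneg _) (hx j).le))
    (fun j _ => by field_simp [(hx j).ne']; rfl)

theorem sum_div_mul_sq_mulVec_lt (hM : ∀ i j, 0 ≤ M i j) (hx : ∀ i, 0 < x i)
    (hMx : ∀ i, (M *ᵥ x) i ≤ x i) {y : n → α} (hy : ∀ i, 0 ≤ y i)
    (hMy : ∀ i, (Mᵀ *ᵥ y) i < y i) {z : n → α} (hz : z ≠ 0) :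
    ∑ i, y i / x i * (M *ᵥ z) i ^ 2 < ∑ i, y i / x i * z i ^ 2 := by
  set w : n → α := fun j => z j ^ 2 / x j
  have hw : ∀ j, 0 ≤ w j := fun j => div_nonneg (sq_nonneg _) (hx j).le
  obtain ⟨j₀, hj₀⟩ : ∃ j, z j ≠ 0 := Function.ne_iff.mp hz
  have hwj₀ : 0 < w j₀ := div_pos (by positivity) (hx j₀)
  calc ∑ i, y i / x i * (M *ᵥ z) i ^ 2
      ≤ ∑ i, y i / x i * ((M *ᵥ x) i * (M *ᵥ w) i) := by
        gcongr with i
        · exact div_nonneg (hy i) (hx i).le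
        · exact sq_mulVec_apply_le hM hx z i
    _ ≤ ∑ i, y i / x i * (x i * (M *ᵥ w) i) := by
        gcongr with i
        · exact div_nonneg (hy i) (hx i).le
        · exact mulVec_apply_nonneg hM hw i
        · exact hMx i
    _ = y ⬝ᵥ (M *ᵥ w) := sum_congr rfl fun i _ => by field_simp [(hx i).ne']
    _ = (Mᵀ *ᵥ y) ⬝ᵥ w := by rw [dotProduct_mulVec, mulVec_transpose]
    _ < y ⬝ᵥ w := sum_lt_sum (fun j _ => mul_le_mul_of_nonneg_right (hMy j).le (hw j))
        ⟨j₀, mem_univ j₀, mul_lt_mul_of_pos_right (hMy j₀) hwj₀⟩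
    _ = ∑ i, y i / x i * z i ^ 2 := sum_congr rfl fun i _ => by
        simp only [w]; field_simp [(hx i).ne']

end LinearOrderedField

theorem exists_pos_mulVec_lt_of_specRad_lt_one {n : Type*} [Fintype n] [DecidableEq n]
    {M : Matrix n n ℝ} (hM : ∀ i j, 0 ≤ M i j) (hρ : specRad M < 1) :
    ∃ x : n → ℝ, (∀ i, 0 < x i) ∧ ∀ i, (M *ᵥ x) i < x i := by
  obtain ⟨k, hk⟩ := exists_pow_sum_abs_lt_one_of_specRad_lt_one hρ
  refine exists_pos_mulVec_lt_of_sum_pow_lt_one hM (k := k) fun i => ?_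
  simpa only [abs_of_nonneg (pow_apply_nonneg hM k i _)] using hk i

/-- **Diagonal Lyapunov function for Schur-stable nonnegative matrices.**
If `M` is a nonnegative matrix with `ρ(M) < 1`, then there is a diagonal matrix `P` with
strictly positive diagonal entries such that `Mᵀ P M − P` is negative definite. -/
theorem diagonal_lyapunov_for_schur_stable_nonneg
    {N : ℕ} (M : Matrix (Fin N) (Fin N) ℝ)
    (hM : ∀ i j, 0 ≤ M i j) (hρ : specRad M < 1) :
    ∃ p : Fin N → ℝ, (∀ i, 0 < p i) ∧
      ∀ z : Fin N → ℝ, z ≠ 0 →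
        z ⬝ᵥ ((Mᵀ * Matrix.diagonal p * M - Matrix.diagonal p) *ᵥ z) < 0 := by
  obtain ⟨x, hx, hMx⟩ := exists_pos_mulVec_lt_of_specRad_lt_one hM hρ
  obtain ⟨y, hy, hMy⟩ :=
    exists_pos_mulVec_lt_of_specRad_lt_one (M := Mᵀ) (fun i j => hM j i)
      (by rwa [specRad_transpose])
  refine ⟨y / x, fun i => div_pos (hy i) (hx i), fun z hz => ?_⟩
  rw [dotProduct_transpose_mul_diagonal_mul_sub_diagonal_mulVec, sub_neg]
  exact sum_div_mul_sq_mulVec_lt hM hx (fun i => (hMx i).le) (fun i => (hy i).le) hMy hz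
end
end

section
/- Uniform power bound for uniformly Schur-stable matrices: Let N ≥ 1, let μ ∈ (0, 1/2), let L > 0, and let M ∈ ℝ^{N×N} satisfy ρ(M) ≤ 1 − 2μ and ‖M‖ ≤ L. Then for every integer P ≥ 0, ‖M^P‖ ≤ ((1 − μ)^{P+1} / μ^N) (1 − μ + L)^{N−1}. In particular, ‖M^P‖ ≤ m₁ p₁^P for all P ≥ 0, where m₁ := ((1 − μ)/μ^N)(1 − μ + L)^{N−1} and p₁ := 1 − μ < 1. -/
/-!
Over `ℂ`, let `λ₀, …, λ_{N-1}` be the eigenvalues of `M`, so `‖λⱼ‖ ≤ ρ := 1 - 2μ`. In the Newton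
basis `ωₖ = ∏_{j<k} (X - λⱼ)` one has `X ^ P = ∑ₖ h_{P-k}(λ₀, …, λₖ) ωₖ`, and `ωₖ(M) = 0` for
`k ≥ N` by Cayley–Hamilton. Since `‖ωₖ(M)‖ ≤ (L + ρ) ^ k` and the recursion of the complete
homogeneous polynomials gives `‖h_{P-k}(λ₀, …, λₖ)‖ μ ^ k ≤ (ρ + μ) ^ P`, we get
`‖M ^ P‖ ≤ (1 - μ) ^ P ∑_{k<N} ((L + ρ) / μ) ^ k ≤ (1 - μ) ^ P ((1 - μ + L) / μ) ^ (N - 1)`.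
Complexifying a real matrix does not change its Euclidean operator norm.
-/

open Matrix

noncomputable section

/-- Operator norm of a real matrix induced by the Euclidean vector norm. -/
def opNorm2R {N : Type*} [Fintype N] [DecidableEq N] (A : Matrix N N ℝ) : ℝ :=
  ‖Matrix.toEuclideanCLM (𝕜 := ℝ) A‖

open Polynomial Lagrange Finset WithLp

/-- `newtonCoeff v P k = h_{P-k}(v 0, …, v k)`, the coefficient of `nodal (range k) v` in the
Newton expansion of `X ^ P`. -/
def newtonCoeff {R : Type*} [Semiring R] (v : ℕ → R) : ℕ → ℕ → R
  | 0, 0 => 1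
  | 0, _ + 1 => 0
  | P + 1, 0 => v 0 * newtonCoeff v P 0
  | P + 1, k + 1 => newtonCoeff v P k + v (k + 1) * newtonCoeff v P (k + 1)

theorem norm_newtonCoeff_mul_pow_le {R : Type*} [SeminormedRing R] [NormOneClass R]
    {v : ℕ → R} {ρ μ : ℝ} (hv : ∀ j, ‖v j‖ ≤ ρ) (hμ : 0 ≤ μ) :
    ∀ P k, ‖newtonCoeff v P k‖ * μ ^ k ≤ (ρ + μ) ^ P
  | 0, 0 => by simp [newtonCoeff]
  | 0, k + 1 => by simp [newtonCoeff]
  | P + 1, 0 => by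
    have hρ : 0 ≤ ρ := (norm_nonneg _).trans (hv 0)
    have ih := norm_newtonCoeff_mul_pow_le hv hμ P 0
    simp only [pow_zero, mul_one] at ih ⊢
    calc ‖newtonCoeff v (P + 1) 0‖ ≤ ρ * (ρ + μ) ^ P :=
          (norm_mul_le _ _).trans (mul_le_mul (hv 0) ih (norm_nonneg _) hρ)
      _ ≤ (ρ + μ) ^ (P + 1) := by rw [pow_succ']; gcongr; linarith
  | P + 1, k + 1 => by
    have ih₁ := norm_newtonCoeff_mul_pow_le hv hμ P k
    have ih₂ := norm_newtonCoeff_mul_pow_le hv hμ P (k + 1)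
    have hρ : 0 ≤ ρ := (norm_nonneg _).trans (hv 0)
    calc ‖newtonCoeff v (P + 1) (k + 1)‖ * μ ^ (k + 1)
        ≤ (‖newtonCoeff v P k‖ + ρ * ‖newtonCoeff v P (k + 1)‖) * μ ^ (k + 1) := by
          gcongr
          refine (norm_add_le _ _).trans ?_
          gcongr
          exact (norm_mul_le _ _).trans (by gcongr; exact hv _)
      _ = μ * (‖newtonCoeff v P k‖ * μ ^ k) + ρ * (‖newtonCoeff v P (k + 1)‖ * μ ^ (k + 1)) := by
          ring
      _ ≤ μ * (ρ + μ) ^ P + ρ * (ρ + μ) ^ P := by gcongr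
      _ = (ρ + μ) ^ (P + 1) := by ring

theorem Lagrange.X_mul_nodal_range {R : Type*} [CommRing R] (v : ℕ → R) (k : ℕ) :
    X * nodal (range k) v = nodal (range (k + 1)) v + C (v k) * nodal (range k) v := by
  rw [nodal, nodal, prod_range_succ]
  ring

theorem Lagrange.nodal_range_length_getD {R : Type*} [CommRing R] (l : List R) (d : R) :
    nodal (range l.length) (fun j => l.getD j d) = (l.map fun a => X - C a).prod := by
  induction l with
  | nil => simp [nodal]
  | cons a l ih =>
    rw [nodal, List.length_cons, prod_range_succ', ← nodal] at *
    simp [← ih, mul_comm]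

theorem pow_eq_sum_newtonCoeff_smul_aeval_nodal {𝕜 R : Type*} [CommRing 𝕜] [Ring R]
    [Algebra 𝕜 R] {a : R} {v : ℕ → 𝕜} {n : ℕ} (ha : aeval a (nodal (range n) v) = 0) (P : ℕ) :
    a ^ P = ∑ k ∈ range n, newtonCoeff v P k • aeval a (nodal (range k) v) := by
  have hstep (k : ℕ) : a * aeval a (nodal (range k) v)
      = aeval a (nodal (range (k + 1)) v) + v k • aeval a (nodal (range k) v) := by
    simpa [Algebra.smul_def] using congrArg (aeval a) (X_mul_nodal_range v k)
  cases n with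
  | zero =>
    have : Subsingleton R := subsingleton_of_zero_eq_one (by simpa [nodal] using ha.symm)
    exact Subsingleton.elim _ _
  | succ m =>
    induction P with
    | zero => simp [sum_range_succ', newtonCoeff, nodal]
    | succ P ih =>
      rw [pow_succ', ih, mul_sum]
      simp only [mul_smul_comm, hstep, smul_add, smul_smul, sum_add_distrib]
      rw [sum_range_succ _ m, ha, smul_zero, add_zero, sum_range_succ' _ m, sum_range_succ' _ m]
      simp only [newtonCoeff, add_smul, sum_add_distrib, mul_comm]
      abel

section NormedAlgebra

variable {𝕜 R : Type*} [NormedField 𝕜] [SeminormedRing R] [NormedAlgebra 𝕜 R] [NormOneClass R]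
  {a : R} {v : ℕ → 𝕜} {L ρ : ℝ}

theorem norm_aeval_nodal_range_le (ha : ‖a‖ ≤ L) (hv : ∀ j, ‖v j‖ ≤ ρ) (k : ℕ) :
    ‖aeval a (nodal (range k) v)‖ ≤ (L + ρ) ^ k := by
  induction k with
  | zero => simp [nodal]
  | succ k ih =>
    have hfactor : ‖a - algebraMap 𝕜 R (v k)‖ ≤ L + ρ :=
      (norm_sub_le _ _).trans (add_le_add ha ((norm_algebraMap' R _).le.trans (hv k)))
    rw [nodal, prod_range_succ, ← nodal, map_mul, pow_succ]
    refine (norm_mul_le _ _).trans (mul_le_mul ih ?_ (norm_nonneg _) ((norm_nonneg _).trans ih))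
    simpa [Algebra.algebraMap_eq_smul_one] using hfactor

theorem norm_pow_le_of_aeval_nodal_eq_zero {n : ℕ} {μ : ℝ} (ha : ‖a‖ ≤ L)
    (hv : ∀ j, ‖v j‖ ≤ ρ) (hμ : 0 < μ) (hnodal : aeval a (nodal (range n) v) = 0) (P : ℕ) :
    ‖a ^ P‖ ≤ (ρ + μ) ^ P * ∑ k ∈ range n, ((L + ρ) / μ) ^ k := by
  have hLρ : 0 ≤ L + ρ := add_nonneg ((norm_nonneg _).trans ha) ((norm_nonneg _).trans (hv 0))
  rw [pow_eq_sum_newtonCoeff_smul_aeval_nodal hnodal, mul_sum]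
  refine (norm_sum_le _ _).trans (sum_le_sum fun k _ => ?_)
  calc ‖newtonCoeff v P k • aeval a (nodal (range k) v)‖
      ≤ ‖newtonCoeff v P k‖ * (L + ρ) ^ k :=
        (norm_smul_le _ _).trans (by gcongr; exact norm_aeval_nodal_range_le ha hv k)
    _ = ‖newtonCoeff v P k‖ * μ ^ k * ((L + ρ) / μ) ^ k := by
        rw [div_pow, mul_assoc, mul_div_cancel₀ _ (pow_ne_zero k hμ.ne')]
    _ ≤ (ρ + μ) ^ P * ((L + ρ) / μ) ^ k := by
        gcongr
        exact norm_newtonCoeff_mul_pow_le hv hμ.le P k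

end NormedAlgebra

theorem geom_sum_le_one_add_pow {x : ℝ} (hx : 0 ≤ x) (m : ℕ) :
    ∑ k ∈ range (m + 1), x ^ k ≤ (1 + x) ^ m := by
  induction m with
  | zero => simp
  | succ m ih =>
    rw [geom_sum_succ, pow_succ']
    nlinarith [one_le_pow₀ (by linarith : (1 : ℝ) ≤ 1 + x) (n := m)]

theorem pow_mul_geom_sum_le {p μ b : ℝ} (hμ : 0 < μ) (hμp : μ ≤ p) (hb : 0 ≤ b) (P m : ℕ) :
    p ^ P * ∑ k ∈ range (m + 1), (b / μ) ^ k ≤ p ^ (P + 1) / μ ^ (m + 1) * (μ + b) ^ m := by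
  have hp : 0 ≤ p := hμ.le.trans hμp
  calc p ^ P * ∑ k ∈ range (m + 1), (b / μ) ^ k ≤ p ^ P * (1 + b / μ) ^ m := by
        gcongr
        exact geom_sum_le_one_add_pow (by positivity) m
    _ ≤ p ^ P * (p / μ) * (1 + b / μ) ^ m := by
        gcongr
        exact le_mul_of_one_le_right (by positivity) ((one_le_div₀ hμ).mpr hμp)
    _ = p ^ (P + 1) / μ ^ (m + 1) * (μ + b) ^ m := by
        rw [one_add_div hμ.ne', div_pow, pow_succ, pow_succ]
        field_simp

theorem spectrum.norm_le_of_spectralRadius_le {𝕜 A : Type*} [NormedField 𝕜] [Ring A]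
    [Algebra 𝕜 A] {a : A} {z : 𝕜} {ρ : ℝ} (hρ : 0 ≤ ρ) (hz : z ∈ spectrum 𝕜 a)
    (ha : spectralRadius 𝕜 a ≤ ENNReal.ofReal ρ) : ‖z‖ ≤ ρ := by
  have : (‖z‖₊ : ENNReal) ≤ ENNReal.ofReal ρ :=
    (le_iSup₂ (f := fun k (_ : k ∈ spectrum 𝕜 a) => (‖k‖₊ : ENNReal)) z hz).trans ha
  rwa [← ENNReal.ofReal_coe_nnreal, coe_nnnorm, ENNReal.ofReal_le_ofReal_iff hρ] at this

theorem EuclideanSpace.norm_sq_re_add_norm_sq_im {n : Type*} [Fintype n]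
    (x : EuclideanSpace ℂ n) :
    ‖toLp 2 fun i => (x i).re‖ ^ 2 + ‖toLp 2 fun i => (x i).im‖ ^ 2 = ‖x‖ ^ 2 := by
  simp only [EuclideanSpace.norm_sq_eq, ← sum_add_distrib, Real.norm_eq_abs, sq_abs,
    Complex.sq_norm, Complex.normSq_apply]
  exact sum_congr rfl fun i _ => by ring

namespace Matrix

variable {n : Type*} [Fintype n] [DecidableEq n]

theorem exists_nodal_eq_charpoly (A : Matrix n n ℂ) {ρ : ℝ} (hρ : 0 ≤ ρ)
    (hA : spectralRadius ℂ A ≤ ENNReal.ofReal ρ) :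
    ∃ v : ℕ → ℂ, (∀ j, ‖v j‖ ≤ ρ) ∧ nodal (range (Fintype.card n)) v = A.charpoly := by
  set l := A.charpoly.roots.toList
  have hsplits : A.charpoly.Splits := IsAlgClosed.splits _
  have hlen : l.length = Fintype.card n := by
    rw [Multiset.length_toList, splits_iff_card_roots.mp hsplits, charpoly_natDegree_eq_dim]
  refine ⟨fun j => l.getD j 0, fun j => ?_, ?_⟩
  · change ‖l.getD j 0‖ ≤ ρ
    rcases lt_or_ge j l.length with hj | hj
    · rw [List.getD_eq_getElem _ _ hj]
      have hroot : A.charpoly.IsRoot l[j] :=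
        (mem_roots'.mp (Multiset.mem_toList.mp (List.getElem_mem hj))).2
      exact spectrum.norm_le_of_spectralRadius_le hρ
        (mem_spectrum_iff_isRoot_charpoly.mpr hroot) hA
    · rwa [List.getD_eq_default _ _ hj, norm_zero]
  · rw [← hlen, nodal_range_length_getD, ← Multiset.prod_coe, ← Multiset.map_coe,
      Multiset.coe_toList, ← hsplits.eq_prod_roots_of_monic A.charpoly_monic]

theorem aeval_toEuclideanCLM_charpoly (A : Matrix n n ℂ) :
    aeval (toEuclideanCLM (𝕜 := ℂ) A) A.charpoly = 0 := by
  rw [← StarAlgEquiv.coe_toAlgEquiv, ← AlgEquiv.coe_toAlgHom, aeval_algHom_apply,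
    aeval_self_charpoly, map_zero]

theorem toEuclideanCLM_map_ofReal_comp (A : Matrix n n ℝ) (f : ℂ →ₗ[ℝ] ℝ)
    (x : EuclideanSpace ℂ n) :
    (toLp 2 fun i => f (toEuclideanCLM (𝕜 := ℂ) (A.map (↑)) x i))
      = toEuclideanCLM (𝕜 := ℝ) A (toLp 2 fun i => f (x i)) := by
  ext i
  simp [mulVec, dotProduct, map_sum, ← Complex.real_smul]

theorem norm_toEuclideanCLM_map_ofReal (A : Matrix n n ℝ) :
    ‖toEuclideanCLM (𝕜 := ℂ) (A.map (↑))‖ = ‖toEuclideanCLM (𝕜 := ℝ) A‖ := by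
  set Aℂ := toEuclideanCLM (𝕜 := ℂ) (A.map (↑))
  set Aℝ := toEuclideanCLM (𝕜 := ℝ) A
  have hsq (x : EuclideanSpace ℂ n) : ‖Aℂ x‖ ^ 2
      = ‖Aℝ (toLp 2 fun i => (x i).re)‖ ^ 2 + ‖Aℝ (toLp 2 fun i => (x i).im)‖ ^ 2 := by
    have hre := toEuclideanCLM_map_ofReal_comp A Complex.reLm x
    have him := toEuclideanCLM_map_ofReal_comp A Complex.imLm x
    simp only [Complex.reLm_coe, Complex.imLm_coe] at hre him
    rw [← EuclideanSpace.norm_sq_re_add_norm_sq_im, ← hre, ← him]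
  have hAℝ (u : EuclideanSpace ℝ n) : ‖Aℝ u‖ ^ 2 ≤ ‖Aℝ‖ ^ 2 * ‖u‖ ^ 2 := by
    rw [← mul_pow]
    gcongr
    exact Aℝ.le_opNorm u
  apply le_antisymm
  · refine Aℂ.opNorm_le_bound (norm_nonneg _) fun x => ?_
    refine (pow_le_pow_iff_left₀ (norm_nonneg _) (by positivity) two_ne_zero).mp ?_
    rw [hsq, mul_pow, ← EuclideanSpace.norm_sq_re_add_norm_sq_im x, mul_add]
    exact add_le_add (hAℝ _) (hAℝ _)
  · refine Aℝ.opNorm_le_bound (norm_nonneg _) fun y => ?_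
    set z : EuclideanSpace ℂ n := toLp 2 fun i => (y i : ℂ)
    have hz : ‖z‖ = ‖y‖ := by simp [z, EuclideanSpace.norm_eq]
    refine (pow_le_pow_iff_left₀ (norm_nonneg _) (by positivity) two_ne_zero).mp ?_
    calc ‖Aℝ y‖ ^ 2 = ‖Aℂ z‖ ^ 2 := by
          rw [hsq]
          change _ = ‖Aℝ y‖ ^ 2 + ‖Aℝ 0‖ ^ 2
          simp
      _ ≤ (‖Aℂ‖ * ‖y‖) ^ 2 := by rw [← hz]; gcongr; exact Aℂ.le_opNorm z

end Matrix

theorem uniform_power_bound_schur_stable_general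
    {N : ℕ} (hN : 1 ≤ N) (μ L : ℝ) (hμ0 : 0 < μ) (hμhalf : μ < 1 / 2)
    (M : Matrix (Fin N) (Fin N) ℝ)
    (hρ : specRad M ≤ ENNReal.ofReal (1 - 2 * μ))
    (hM : opNorm2R M ≤ L) :
    ∀ P : ℕ,
      opNorm2R (M ^ P) ≤ ((1 - μ) ^ (P + 1) / μ ^ N) * (1 - μ + L) ^ (N - 1) ∧
      opNorm2R (M ^ P) ≤ (((1 - μ) / μ ^ N) * (1 - μ + L) ^ (N - 1)) * (1 - μ) ^ P := by
  intro P
  obtain ⟨m, rfl⟩ : ∃ m, N = m + 1 := ⟨N - 1, by omega⟩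
  obtain ⟨v, hv, hnodal⟩ := exists_nodal_eq_charpoly (M.map (↑)) (by linarith) hρ
  set T := toEuclideanCLM (𝕜 := ℂ) (M.map (↑))
  have hT : ‖T‖ ≤ L := (norm_toEuclideanCLM_map_ofReal M).trans_le hM
  have hTv : aeval T (nodal (range (m + 1)) v) = 0 := by
    rw [Fintype.card_fin] at hnodal
    rw [hnodal]
    exact aeval_toEuclideanCLM_charpoly _
  have hpow : opNorm2R (M ^ P) = ‖T ^ P‖ := by
    rw [opNorm2R, ← norm_toEuclideanCLM_map_ofReal, ← map_pow]
    congr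
    exact Matrix.map_pow M Complex.ofRealHom P
  have hLρ : 0 ≤ L + (1 - 2 * μ) := by linarith [(norm_nonneg _).trans hM]
  have hbound : opNorm2R (M ^ P) ≤ ((1 - μ) ^ (P + 1) / μ ^ (m + 1)) * (1 - μ + L) ^ m := by
    rw [hpow]
    calc ‖T ^ P‖ ≤ (1 - 2 * μ + μ) ^ P * ∑ k ∈ range (m + 1), ((L + (1 - 2 * μ)) / μ) ^ k :=
          norm_pow_le_of_aeval_nodal_eq_zero hT hv hμ0 hTv P
      _ ≤ (1 - 2 * μ + μ) ^ (P + 1) / μ ^ (m + 1) * (μ + (L + (1 - 2 * μ))) ^ m :=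
          pow_mul_geom_sum_le hμ0 (by linarith) hLρ P m
      _ = ((1 - μ) ^ (P + 1) / μ ^ (m + 1)) * (1 - μ + L) ^ m := by ring_nf
  simp only [Nat.add_sub_cancel]
  exact ⟨hbound, hbound.trans_eq (by ring)⟩

/-- **Uniform power bound for uniformly Schur-stable matrices.**
If `ρ(M) ≤ 1 − 2μ` with `μ ∈ (0, 1/2)` and `‖M‖ ≤ L`, then for every `P ≥ 0`,
`‖M^P‖ ≤ ((1−μ)^{P+1}/μ^N)(1−μ+L)^{N−1}`; in particular `‖M^P‖ ≤ m₁ p₁^P` with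
`m₁ = ((1−μ)/μ^N)(1−μ+L)^{N−1}` and `p₁ = 1−μ < 1`. -/
theorem uniform_power_bound_schur_stable
    {N : ℕ} (hN : 1 ≤ N) (μ L : ℝ) (hμ0 : 0 < μ) (hμhalf : μ < 1 / 2) (hL : 0 < L)
    (M : Matrix (Fin N) (Fin N) ℝ)
    (hρ : specRad M ≤ ENNReal.ofReal (1 - 2 * μ))
    (hM : opNorm2R M ≤ L) :
    ∀ P : ℕ,
      opNorm2R (M ^ P) ≤ ((1 - μ) ^ (P + 1) / μ ^ N) * (1 - μ + L) ^ (N - 1) ∧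
      opNorm2R (M ^ P) ≤ (((1 - μ) / μ ^ N) * (1 - μ + L) ^ (N - 1)) * (1 - μ) ^ P :=
  uniform_power_bound_schur_stable_general hN μ L hμ0 hμhalf M hρ hM
end
end
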